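/- Let q ∈ (0,1) and m ≥ 1 an integer. Define T = Σ_{j=1}^{R} t_j where t_j are i.i.d. Geometric(q) and R is an independent coupon-collector variable for m coupons (R = Σ_{l=1}^m Geom(1 - (l-1)/m)). Then for s_1 = log(1/(1 - q/(2m))), E[e^{s_1 T}] = m! q^m / ∏_{l=1}^m (m(e^{-s_1} - (1-q)) - (l-1)q), and in particular E[e^{s_1 T}] = 4^m (m!)^2 / (2m)!. -/

import Mathlib

open MeasureTheory ProbabilityTheory
open scoped ENNReal

section Aux
variable {Ω : Type*} [MeasurableSpace Ω] {μ : Measure Ω}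

lemma aux_lintegral_comp_nat {f : Ω → ℕ} (hf : Measurable f) (g : ℕ → ℝ≥0∞) :
    ∫⁻ ω, g (f ω) ∂μ = ∑' n, g n * μ (f ⁻¹' {n}) := by
  rw [← lintegral_map measurable_from_top hf, lintegral_countable']
  congr 1
  funext n
  rw [Measure.map_apply hf (measurableSet_singleton n)]

lemma aux_geom_tsum (a r : ℝ) (ha : 0 ≤ a) (hr0 : 0 ≤ r) (hr1 : r < 1) :
    ∑' k : ℕ, ENNReal.ofReal (a * r ^ k) = ENNReal.ofReal (a / (1 - r)) := by
  rw [← ENNReal.ofReal_tsum_of_nonneg (fun k => by positivity)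
      ((summable_geometric_of_lt_one hr0 hr1).mul_left a)]
  congr 1
  rw [tsum_mul_left, tsum_geometric_of_lt_one hr0 hr1, div_eq_mul_inv]

lemma aux_zero_mass [IsProbabilityMeasure μ] {f : Ω → ℕ} (hf : Measurable f)
    (h : ∑' k : ℕ, μ (f ⁻¹' {k + 1}) = 1) : μ (f ⁻¹' {0}) = 0 := by
  have htot : ∑' n : ℕ, μ (f ⁻¹' {n}) = 1 := by
    rw [← measure_iUnion (fun n n' hnn => Disjoint.preimage f (by simp [hnn]))
      (fun n => hf (measurableSet_singleton n))]
    have : (⋃ n : ℕ, f ⁻¹' {n}) = Set.univ := by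
      ext ω; simp
    rw [this, measure_univ]
  rw [tsum_eq_zero_add' ENNReal.summable, h] at htot
  refine WithTop.add_right_cancel ENNReal.one_ne_top ?_
  exact htot.trans (zero_add 1).symm

lemma aux_lintegral_prod {ι : Type*} [IsProbabilityMeasure μ] {F : ι → Ω → ℕ}
    (hmeas : ∀ i, Measurable (F i))
    (hindep : iIndepFun F μ) (φ : ι → ℕ → ℝ≥0∞) (s : Finset ι) :
    ∫⁻ ω, ∏ i ∈ s, φ i (F i ω) ∂μ = ∏ i ∈ s, ∫⁻ ω, φ i (F i ω) ∂μ := by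
  classical
  induction s using Finset.induction_on with
  | empty => simp
  | insert i s hi ih =>
    simp_rw [Finset.prod_insert hi]
    have hdisj : Disjoint ({i} : Finset ι) s := by simpa using hi
    have base := hindep.indepFun_finset {i} s hdisj hmeas
    set φL : ({x // x ∈ ({i} : Finset ι)} → ℕ) → ℝ≥0∞ :=
      fun v => φ i (v ⟨i, Finset.mem_singleton_self i⟩) with hφL
    set ψ : ({x // x ∈ s} → ℕ) → ℝ≥0∞ := fun v => ∏ a : {x // x ∈ s}, φ a (v a) with hψ
    have hφLm : Measurable φL :=
      measurable_from_top.comp (measurable_pi_apply _)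
    have hψm : Measurable ψ :=
      Finset.measurable_prod _ fun a _ => measurable_from_top.comp (measurable_pi_apply a)
    have h2 := base.comp hφLm hψm
    have hf_eq : (φL ∘ fun ω (a : {x // x ∈ ({i} : Finset ι)}) => F a ω)
        = fun ω => φ i (F i ω) := rfl
    have hg_eq : (ψ ∘ fun ω (a : {x // x ∈ s}) => F a ω)
        = fun ω => ∏ a ∈ s, φ a (F a ω) := by
      funext ω
      simp only [Function.comp_apply, hψ]
      exact Finset.prod_coe_sort s fun a => φ a (F a ω)
    rw [hf_eq, hg_eq] at h2
    have hmul := lintegral_mul_eq_lintegral_mul_lintegral_of_indepFun''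
      (f := fun ω => φ i (F i ω)) (g := fun ω => ∏ a ∈ s, φ a (F a ω))
      (measurable_from_top.comp (hmeas i)).aemeasurable
      (Finset.measurable_prod _ fun a _ => measurable_from_top.comp (hmeas a)).aemeasurable h2
    rw [hmul, ih]

lemma aux_prod1 (n : ℕ) : ∏ j ∈ Finset.range n, ((j : ℝ) + 1) = n.factorial := by
  induction n with
  | zero => simp
  | succ n ih =>
    rw [Finset.prod_range_succ, ih, Nat.factorial_succ]
    push_cast
    ring

lemma aux_prod2 (n : ℕ) :
    ∏ j ∈ Finset.range n, (2 * (j : ℝ) + 1) = (2 * n).factorial / (2 ^ n * n.factorial) := by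
  induction n with
  | zero => simp
  | succ n ih =>
    have h2 : 2 * (n + 1) = (2 * n + 1) + 1 := by ring
    rw [Finset.prod_range_succ, ih, h2, Nat.factorial_succ, Nat.factorial_succ, Nat.factorial_succ]
    have hfac : ((2 * n).factorial : ℝ) ≠ 0 := Nat.cast_ne_zero.mpr (Nat.factorial_ne_zero _)
    have hnf : ((n).factorial : ℝ) ≠ 0 := Nat.cast_ne_zero.mpr (Nat.factorial_ne_zero _)
    have h2n : (2 : ℝ) ^ n ≠ 0 := by positivity
    push_cast
    field_simp
    ring

lemma aux_reflect (m : ℕ) (h : ℝ → ℝ) :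
    ∏ l ∈ Finset.range m, h ((m : ℝ) - l) = ∏ j ∈ Finset.range m, h ((j : ℝ) + 1) := by
  rw [← Finset.prod_range_reflect (fun j => h ((j : ℝ) + 1)) m]
  refine Finset.prod_congr rfl fun l hl => ?_
  have hlm : l < m := Finset.mem_range.mp hl
  congr 1
  have : m - 1 - l = m - (l + 1) := by omega
  rw [this, Nat.cast_sub (by omega)]
  push_cast
  ring

lemma aux_prodA (m : ℕ) :
    ∏ l : Fin m, (2 * ((m : ℝ) - l)) = 2 ^ m * m.factorial := by
  rw [Fin.prod_univ_eq_prod_range (fun l => 2 * ((m : ℝ) - l)) m,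
    aux_reflect m (fun x => 2 * x)]
  rw [Finset.prod_mul_distrib, Finset.prod_const, Finset.card_range, aux_prod1]

lemma aux_prodB (m : ℕ) :
    ∏ l : Fin m, (2 * ((m : ℝ) - l) - 1) = (2 * m).factorial / (2 ^ m * m.factorial) := by
  rw [Fin.prod_univ_eq_prod_range (fun l => 2 * ((m : ℝ) - l) - 1) m,
    aux_reflect m (fun x => 2 * x - 1), ← aux_prod2]
  refine Finset.prod_congr rfl fun j _ => by ring

end Aux

lemma aux_geom_mgf {Ω : Type*} [MeasurableSpace Ω] {μ : Measure Ω} [IsProbabilityMeasure μ]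
    {f : Ω → ℕ} (hf : Measurable f)
    (r x : ℝ) (hr0 : 0 ≤ r) (hr1 : r < 1) (hx0 : 0 ≤ x) (hxr : x * r < 1)
    (hdist : ∀ k : ℕ, μ (f ⁻¹' {k + 1}) = ENNReal.ofReal ((1 - r) * r ^ k)) :
    ∫⁻ ω, (ENNReal.ofReal x) ^ (f ω) ∂μ = ENNReal.ofReal (x * (1 - r) / (1 - x * r)) := by
  have h1r : 0 < 1 - r := by linarith
  have h0 : μ (f ⁻¹' {0}) = 0 := by
    refine aux_zero_mass hf ?_
    simp_rw [hdist]
    rw [aux_geom_tsum _ _ h1r.le hr0 hr1, div_self h1r.ne', ENNReal.ofReal_one]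
  rw [aux_lintegral_comp_nat hf (fun n => (ENNReal.ofReal x) ^ n)]
  rw [tsum_eq_zero_add' ENNReal.summable]
  simp only [pow_zero, one_mul, h0, zero_add]
  have hterm : ∀ k : ℕ, (ENNReal.ofReal x) ^ (k + 1) * μ (f ⁻¹' {k + 1})
      = ENNReal.ofReal ((x * (1 - r)) * (x * r) ^ k) := by
    intro k
    rw [hdist k, ← ENNReal.ofReal_pow hx0, ← ENNReal.ofReal_mul (by positivity)]
    congr 1
    rw [mul_pow]
    ring
  rw [tsum_congr hterm, aux_geom_tsum _ _ (by positivity) (by positivity) hxr]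

set_option maxHeartbeats 1000000

/-- MGF of the Phase-I dominating variable `T = Σ_{j=1}^R t_j`, with `t_j` i.i.d.
`Geometric(q)` and `R` an independent coupon-collector count over `m` coupons:
for `s₁ = log(1/(1 - q/(2m)))`,
`E[e^{s₁T}] = m! q^m / ∏_{l=1}^m (m(e^{-s₁} - (1-q)) - (l-1)q)`, and in particular
`E[e^{s₁T}] = 4^m (m!)² / (2m)!`. -/
theorem phase_one_mgf
    {Ω : Type*} [MeasurableSpace Ω] (μ : Measure Ω) [IsProbabilityMeasure μ]
    (m : ℕ) (hm : 1 ≤ m) (q : ℝ) (hq0 : 0 < q) (hq1 : q < 1)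
    (t : ℕ → Ω → ℕ) (G : Fin m → Ω → ℕ) (R : Ω → ℕ) (T : Ω → ℕ)
    (F : ℕ ⊕ Fin m → Ω → ℕ)
    (hF₁ : ∀ j, F (Sum.inl j) = t j) (hF₂ : ∀ l, F (Sum.inr l) = G l)
    (hmeas : ∀ a, Measurable (F a))
    (hindep : iIndepFun F μ)
    (ht_dist : ∀ j k, μ {ω | t j ω = k + 1} = ENNReal.ofReal (q * (1 - q) ^ k))
    (hG_dist : ∀ (l : Fin m) (k : ℕ),
      μ {ω | G l ω = k + 1} =
        ENNReal.ofReal ((1 - (l : ℝ) / m) * ((l : ℝ) / m) ^ k))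
    (hR : ∀ ω, R ω = ∑ l, G l ω)
    (hT : ∀ ω, T ω = ∑ j ∈ Finset.range (R ω), t j ω)
    (s₁ : ℝ) (hs₁ : s₁ = Real.log (1 / (1 - q / (2 * m)))) :
    ∫ ω, Real.exp (s₁ * T ω) ∂μ
        = (m.factorial : ℝ) * q ^ m /
            ∏ l : Fin m, ((m : ℝ) * (Real.exp (-s₁) - (1 - q)) - (l : ℝ) * q) ∧
    ∫ ω, Real.exp (s₁ * T ω) ∂μ
        = 4 ^ m * (m.factorial : ℝ) ^ 2 / ((2 * m).factorial : ℝ) := by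
  classical
  -- basic real facts
  have hm1 : (1 : ℝ) ≤ m := by exact_mod_cast hm
  have hmpos : (0 : ℝ) < m := lt_of_lt_of_le zero_lt_one hm1
  have h2m1 : (1 : ℝ) ≤ 2 * m - 1 := by linarith
  have h1d : 0 < 1 - q / (2 * m) := by
    have : q / (2 * m) < 1 := by
      rw [div_lt_one (by linarith)]; linarith
    linarith
  have hdq : q / (2 * m) < q := by
    rw [div_lt_iff₀ (by linarith)]
    nlinarith
  have hc : Real.exp s₁ = (1 - q / (2 * m))⁻¹ := by
    rw [hs₁, one_div, Real.exp_log (inv_pos.mpr h1d)]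
  have hcinv : Real.exp (-s₁) = 1 - q / (2 * m) := by
    rw [Real.exp_neg, hc, inv_inv]
  -- measurability
  have hmt : ∀ j, Measurable (t j) := fun j => hF₁ j ▸ hmeas (Sum.inl j)
  have hmG : ∀ l, Measurable (G l) := fun l => hF₂ l ▸ hmeas (Sum.inr l)
  have hmR : Measurable R := by
    have : R = fun ω => ∑ l, G l ω := funext hR
    rw [this]
    exact Finset.measurable_sum _ fun l _ => hmG l
  have hmT : Measurable T := by
    apply measurable_to_countable'
    intro n
    have : T ⁻¹' {n} = ⋃ r, (R ⁻¹' {r} ∩ {ω | ∑ j ∈ Finset.range r, t j ω = n}) := by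
      ext ω
      simp only [Set.mem_preimage, Set.mem_singleton_iff, Set.mem_iUnion, Set.mem_inter_iff,
        Set.mem_setOf_eq, hT ω]
      constructor
      · intro h; exact ⟨R ω, rfl, h⟩
      · rintro ⟨r, hr', h⟩; rw [hr']; exact h
    rw [this]
    refine MeasurableSet.iUnion fun r => (hmR (measurableSet_singleton r)).inter ?_
    exact (Finset.measurable_sum _ fun j _ => hmt j) (measurableSet_singleton n)
  -- abbreviations
  set C : ℝ≥0∞ := ENNReal.ofReal (Real.exp s₁) with hCdef
  set xv : ℝ := 2 * m / (2 * m - 1) with hxvdef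
  set X : ℝ≥0∞ := ENNReal.ofReal xv with hXdef
  have hxv0 : 0 ≤ xv := by positivity
  -- mgf of each t j
  have hXj : ∀ j, ∫⁻ ω, C ^ (t j ω) ∂μ = X := by
    intro j
    have hxr : Real.exp s₁ * (1 - q) < 1 := by
      have he : Real.exp s₁ * (1 - q) = (1 - q) / (1 - q / (2 * m)) := by
        rw [hc]; ring
      rw [he, div_lt_one h1d]; linarith
    have hdist : ∀ k : ℕ, μ (t j ⁻¹' {k + 1})
        = ENNReal.ofReal ((1 - (1 - q)) * (1 - q) ^ k) := by
      intro k
      rw [show t j ⁻¹' {k + 1} = {ω | t j ω = k + 1} from rfl, ht_dist j k]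
      congr 1
      ring
    rw [aux_geom_mgf (hmt j) (1 - q) (Real.exp s₁) (by linarith) (by linarith)
      (Real.exp_pos _).le hxr hdist, hXdef]
    congr 1
    have hpos : 0 < 1 - Real.exp s₁ * (1 - q) := by linarith
    have hE2 : Real.exp s₁ * (2 * m - q) = 2 * m := by
      rw [hc, inv_mul_eq_div, div_eq_iff h1d.ne']
      field_simp [hmpos.ne']
    rw [div_eq_iff hpos.ne', hxvdef, div_mul_eq_mul_div, eq_div_iff (by linarith : (2:ℝ) * m - 1 ≠ 0)]
    linear_combination hE2
  -- mgf of each G l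
  have hlm : ∀ l : Fin m, (l : ℝ) + 1 ≤ m := by
    intro l
    exact_mod_cast l.isLt
  have hYl : ∀ l : Fin m, ∫⁻ ω, X ^ (G l ω) ∂μ
      = ENNReal.ofReal (2 * ((m : ℝ) - l) / (2 * ((m : ℝ) - l) - 1)) := by
    intro l
    have hl1 : (l : ℝ) + 1 ≤ m := hlm l
    have hl0 : (0 : ℝ) ≤ l := Nat.cast_nonneg _
    have hp0 : 0 ≤ (l : ℝ) / m := by positivity
    have hp1 : (l : ℝ) / m < 1 := by
      rw [div_lt_one hmpos]; linarith
    have hxp : xv * ((l : ℝ) / m) = 2 * l / (2 * m - 1) := by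
      rw [hxvdef]; field_simp
    have hxr : xv * ((l : ℝ) / m) < 1 := by
      rw [hxp, div_lt_one (by linarith)]; linarith
    have hdist : ∀ k : ℕ, μ (G l ⁻¹' {k + 1})
        = ENNReal.ofReal ((1 - (l : ℝ) / m) * ((l : ℝ) / m) ^ k) := by
      intro k
      rw [show G l ⁻¹' {k + 1} = {ω | G l ω = k + 1} from rfl, hG_dist l k]
    rw [aux_geom_mgf (hmG l) ((l : ℝ) / m) xv hp0 hp1 hxv0 hxr hdist]
    congr 1
    have hpos : 0 < 1 - xv * ((l : ℝ) / m) := by linarith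
    have h3 : (0:ℝ) < 2 * ((m : ℝ) - l) - 1 := by linarith
    rw [div_eq_div_iff hpos.ne' h3.ne', hxvdef]
    field_simp [hmpos.ne']
    ring
  -- finsets of indices
  set Tf : Finset (ℕ ⊕ Fin m) := Finset.univ.image Sum.inr with hTfdef
  -- lintegral of a product of C ^ t j over a range
  have hprodmeas : ∀ r : ℕ, Measurable fun ω => ∏ j ∈ Finset.range r, C ^ (t j ω) :=
    fun r => Finset.measurable_prod _ fun j _ => measurable_from_top.comp (hmt j)
  have step1 : ∀ r : ℕ, ∫⁻ ω, ∏ j ∈ Finset.range r, C ^ (t j ω) ∂μ = X ^ r := by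
    intro r
    have hre : ∀ ω, ∏ j ∈ Finset.range r, C ^ (t j ω)
        = ∏ a ∈ (Finset.range r).image Sum.inl, C ^ (F a ω) := by
      intro ω
      rw [Finset.prod_image (fun x _ y _ h => Sum.inl_injective h)]
      exact Finset.prod_congr rfl fun j _ => by rw [hF₁]
    rw [lintegral_congr hre,
      aux_lintegral_prod hmeas hindep (fun _ n => C ^ n) ((Finset.range r).image Sum.inl),
      Finset.prod_image (fun x _ y _ h => Sum.inl_injective h)]
    have : ∀ j ∈ Finset.range r, ∫⁻ ω, C ^ (F (Sum.inl j) ω) ∂μ = X := by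
      intro j _
      rw [hF₁]
      exact hXj j
    rw [Finset.prod_congr rfl this, Finset.prod_const, Finset.card_range]
  -- independence of the product and the indicator of {R = r}
  have hRsum : ∀ ω, (∑ a : {x // x ∈ Tf}, F a ω) = R ω := by
    intro ω
    rw [Finset.sum_coe_sort Tf (fun a => F a ω), hTfdef,
      Finset.sum_image (fun x _ y _ h => Sum.inr_injective h), hR ω]
    exact Finset.sum_congr rfl fun l _ => by rw [hF₂]
  have step2 : ∀ r : ℕ, IndepFun (fun ω => ∏ j ∈ Finset.range r, C ^ (t j ω))
      (Set.indicator (R ⁻¹' {r}) (1 : Ω → ℝ≥0∞)) μ := by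
    intro r
    set S : Finset (ℕ ⊕ Fin m) := (Finset.range r).image Sum.inl with hSdef
    have hdisj : Disjoint S Tf := by
      rw [Finset.disjoint_left]
      rintro a ha ha'
      rw [hSdef, Finset.mem_image] at ha
      rw [hTfdef, Finset.mem_image] at ha'
      obtain ⟨j, _, rfl⟩ := ha
      obtain ⟨l, _, h⟩ := ha'
      exact Sum.inl_ne_inr h.symm
    have base := hindep.indepFun_finset S Tf hdisj hmeas
    set φb : ({x // x ∈ S} → ℕ) → ℝ≥0∞ := fun v => ∏ a : {x // x ∈ S}, C ^ v a with hφb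
    set ψb : ({x // x ∈ Tf} → ℕ) → ℝ≥0∞ :=
      fun v => if (∑ a : {x // x ∈ Tf}, v a) = r then 1 else 0 with hψb
    have hφbm : Measurable φb :=
      Finset.measurable_prod _ fun a _ => measurable_from_top.comp (measurable_pi_apply a)
    have hψbm : Measurable ψb := by
      have hrfl : ψb = (fun n : ℕ => if n = r then (1 : ℝ≥0∞) else 0) ∘
          (fun v : {x // x ∈ Tf} → ℕ => ∑ a : {x // x ∈ Tf}, v a) := rfl
      rw [hrfl]
      exact measurable_from_top.comp (Finset.measurable_sum _ fun a _ => measurable_pi_apply a)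
    have h2 := base.comp hφbm hψbm
    have hf_eq : (φb ∘ fun ω (a : {x // x ∈ S}) => F a ω)
        = fun ω => ∏ j ∈ Finset.range r, C ^ (t j ω) := by
      funext ω
      simp only [Function.comp_apply, hφb]
      rw [Finset.prod_coe_sort S (fun a => C ^ (F a ω)), hSdef,
        Finset.prod_image (fun x _ y _ h => Sum.inl_injective h)]
      exact Finset.prod_congr rfl fun j _ => by rw [hF₁]
    have hg_eq : (ψb ∘ fun ω (a : {x // x ∈ Tf}) => F a ω)
        = Set.indicator (R ⁻¹' {r}) (1 : Ω → ℝ≥0∞) := by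
      funext ω
      simp only [Function.comp_apply, hψb, hRsum ω, Set.indicator_apply, Set.mem_preimage,
        Set.mem_singleton_iff, Pi.one_apply]
    rw [hf_eq, hg_eq] at h2
    exact h2
  -- the key lintegral identity
  have e2 : ∀ r : ℕ, ∫⁻ ω, Set.indicator (R ⁻¹' {r})
        (fun ω => ∏ j ∈ Finset.range r, C ^ (t j ω)) ω ∂μ
      = X ^ r * μ (R ⁻¹' {r}) := by
    intro r
    have hmul : ∀ ω, Set.indicator (R ⁻¹' {r})
          (fun ω => ∏ j ∈ Finset.range r, C ^ (t j ω)) ω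
        = (∏ j ∈ Finset.range r, C ^ (t j ω)) *
            Set.indicator (R ⁻¹' {r}) (1 : Ω → ℝ≥0∞) ω := by
      intro ω
      by_cases h : ω ∈ R ⁻¹' {r} <;> simp [Set.indicator_apply, h]
    rw [lintegral_congr hmul]
    have hind := lintegral_mul_eq_lintegral_mul_lintegral_of_indepFun''
      (f := fun ω => ∏ j ∈ Finset.range r, C ^ (t j ω))
      (g := Set.indicator (R ⁻¹' {r}) (1 : Ω → ℝ≥0∞))
      (hprodmeas r).aemeasurable
      ((measurable_one.indicator (hmR (measurableSet_singleton r)))).aemeasurable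
      (step2 r)
    rw [hind, step1 r, lintegral_indicator_one (hmR (measurableSet_singleton r))]
  have e1 : ∀ ω, C ^ (T ω) = ∑' r : ℕ, Set.indicator (R ⁻¹' {r})
      (fun ω => ∏ j ∈ Finset.range r, C ^ (t j ω)) ω := by
    intro ω
    rw [tsum_eq_single (R ω) ?side]
    · rw [Set.indicator_of_mem (show ω ∈ R ⁻¹' {R ω} from rfl), Finset.prod_pow_eq_pow_sum, ← hT ω]
    case side =>
      intro b hb
      apply Set.indicator_of_notMem
      simp only [Set.mem_preimage, Set.mem_singleton_iff]
      exact fun h => hb h.symm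
  have hkey : ∫⁻ ω, C ^ (T ω) ∂μ
      = ∏ l : Fin m, ENNReal.ofReal (2 * ((m : ℝ) - l) / (2 * ((m : ℝ) - l) - 1)) := by
    calc ∫⁻ ω, C ^ (T ω) ∂μ
        = ∫⁻ ω, ∑' r : ℕ, Set.indicator (R ⁻¹' {r})
            (fun ω => ∏ j ∈ Finset.range r, C ^ (t j ω)) ω ∂μ := lintegral_congr e1
      _ = ∑' r : ℕ, ∫⁻ ω, Set.indicator (R ⁻¹' {r})
            (fun ω => ∏ j ∈ Finset.range r, C ^ (t j ω)) ω ∂μ :=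
          lintegral_tsum fun r =>
            ((hprodmeas r).indicator (hmR (measurableSet_singleton r))).aemeasurable
      _ = ∑' r : ℕ, X ^ r * μ (R ⁻¹' {r}) := tsum_congr e2
      _ = ∫⁻ ω, X ^ (R ω) ∂μ := (aux_lintegral_comp_nat hmR (fun n => X ^ n)).symm
      _ = ∫⁻ ω, ∏ a ∈ Tf, X ^ (F a ω) ∂μ := by
          refine lintegral_congr fun ω => ?_
          rw [← hRsum ω, Finset.sum_coe_sort Tf (fun a => F a ω),
            ← Finset.prod_pow_eq_pow_sum]
      _ = ∏ a ∈ Tf, ∫⁻ ω, X ^ (F a ω) ∂μ :=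
          aux_lintegral_prod hmeas hindep (fun _ n => X ^ n) Tf
      _ = ∏ l : Fin m, ∫⁻ ω, X ^ (G l ω) ∂μ := by
          rw [hTfdef, Finset.prod_image (fun x _ y _ h => Sum.inr_injective h)]
          exact Finset.prod_congr rfl fun l _ => by rw [hF₂]
      _ = ∏ l : Fin m, ENNReal.ofReal (2 * ((m : ℝ) - l) / (2 * ((m : ℝ) - l) - 1)) :=
          Finset.prod_congr rfl fun l _ => hYl l
  -- convert the Bochner integral
  have hy_nonneg : ∀ l ∈ (Finset.univ : Finset (Fin m)),
      0 ≤ 2 * ((m : ℝ) - l) / (2 * ((m : ℝ) - l) - 1) := by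
    intro l _
    have := hlm l
    apply div_nonneg <;> linarith
  have hval : ∫ ω, Real.exp (s₁ * T ω) ∂μ
      = ∏ l : Fin m, (2 * ((m : ℝ) - l) / (2 * ((m : ℝ) - l) - 1)) := by
    have h1 : Measurable fun ω => (T ω : ℝ) := by
      exact measurable_from_top.comp hmT
    have h2 : Measurable fun ω => Real.exp (s₁ * (T ω : ℝ)) := by
      exact Real.measurable_exp.comp (measurable_const.mul h1)
    rw [integral_eq_lintegral_of_nonneg_ae
      (Filter.Eventually.of_forall fun ω => (Real.exp_pos _).le) h2.aestronglyMeasurable]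
    have hconv : ∀ ω, ENNReal.ofReal (Real.exp (s₁ * T ω)) = C ^ (T ω) := by
      intro ω
      rw [mul_comm, Real.exp_nat_mul, hCdef, ENNReal.ofReal_pow (Real.exp_nonneg _)]
    rw [lintegral_congr hconv, hkey, ← ENNReal.ofReal_prod_of_nonneg hy_nonneg,
      ENNReal.toReal_ofReal (Finset.prod_nonneg hy_nonneg)]
  -- value of the product
  have hfacm : ((m.factorial : ℝ)) ≠ 0 := Nat.cast_ne_zero.mpr (Nat.factorial_ne_zero _)
  have hfac2m : (((2 * m).factorial : ℝ)) ≠ 0 := Nat.cast_ne_zero.mpr (Nat.factorial_ne_zero _)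
  have h2pm : (2 : ℝ) ^ m ≠ 0 := by positivity
  have h4 : (4 : ℝ) ^ m = 2 ^ m * 2 ^ m := by
    rw [← mul_pow]; norm_num
  have hprod4 : ∏ l : Fin m, (2 * ((m : ℝ) - l) / (2 * ((m : ℝ) - l) - 1))
      = 4 ^ m * (m.factorial : ℝ) ^ 2 / ((2 * m).factorial : ℝ) := by
    rw [Finset.prod_div_distrib, aux_prodA, aux_prodB, h4]
    field_simp
  constructor
  · rw [hval, hprod4]
    have hden : ∀ l : Fin m, (m : ℝ) * (Real.exp (-s₁) - (1 - q)) - (l : ℝ) * q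
        = q / 2 * (2 * ((m : ℝ) - l) - 1) := by
      intro l
      rw [hcinv]
      field_simp [hmpos.ne']
      ring
    rw [Finset.prod_congr rfl (fun l _ => hden l), Finset.prod_mul_distrib,
      Finset.prod_const, Finset.card_univ, Fintype.card_fin, aux_prodB, h4]
    rw [div_pow]
    field_simp
  · rw [hval, hprod4]
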